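/- arXiv:1404.0948 — 2 statements merged into one kernel-verified Lean document; each statement's English description precedes it below -/
import Mathlib

section
/- Let C = L_1;L_2 be a two-layer comparator network on n channels containing channels a < b < c < d such that (a,b) and (c,d) are comparators of L_1, channels b and d are unused in L_2, and each of a and c is the smaller endpoint of some comparator of L_2. Let C' be obtained from C by adding the comparator (b,d) to L_2. Then the vector x ∈ {0,1}^n with x_b = x_c = 0 and all other entries equal to 1 satisfies x ∈ outputs(C') and x ∉ outputs(C); in particular outputs(C') ⊄ outputs(C). (This is case (i) in the proof of Theorem 2 of the paper.) -/
/-- A layer: a set of comparators `(i,j)` with `i < j`, each channel in at most one comparator. -/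
def IsLayer {n : ℕ} (L : Finset (Fin n × Fin n)) : Prop :=
  (∀ c ∈ L, c.1 < c.2) ∧
  (∀ c ∈ L, ∀ c' ∈ L, c ≠ c' →
    c.1 ≠ c'.1 ∧ c.1 ≠ c'.2 ∧ c.2 ≠ c'.1 ∧ c.2 ≠ c'.2)

/-- Apply one layer to a binary vector: the first channel of a comparator receives the
minimum (`&&`), the second the maximum (`||`). -/
noncomputable def applyLayer {n : ℕ} (L : Finset (Fin n × Fin n)) (x : Fin n → Bool) :
    Fin n → Bool := fun k =>
  if h : ∃ j, (k, j) ∈ L then x k && x h.choose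
  else if h' : ∃ i, (i, k) ∈ L then x h'.choose || x k
  else x k

/-- Propagate a binary input through the layers of a network (a list of layers). -/
noncomputable def applyNet {n : ℕ} (N : List (Finset (Fin n × Fin n))) (x : Fin n → Bool) :
    Fin n → Bool :=
  N.foldl (fun v L => applyLayer L v) x

/-- The set of binary outputs of a network. -/
noncomputable def outputs {n : ℕ} (N : List (Finset (Fin n × Fin n))) : Set (Fin n → Bool) :=
  Set.range (applyNet N)

/-- A network sorts all binary inputs. -/
def Sorts {n : ℕ} (N : List (Finset (Fin n × Fin n))) : Prop :=
  ∀ x : Fin n → Bool, Monotone (applyNet N x)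

/-- The first layer `F_n`: comparators `(2k-1, 2k)` (0-indexed: `(2k, 2k+1)`). -/
def Fn (n : ℕ) : Finset (Fin n × Fin n) :=
  Finset.univ.filter (fun c => c.1.val % 2 = 0 ∧ c.2.val = c.1.val + 1)

/-- Channel `i` is used by some comparator of `L`. -/
def UsedIn {n : ℕ} (L : Finset (Fin n × Fin n)) (i : Fin n) : Prop :=
  ∃ c ∈ L, c.1 = i ∨ c.2 = i

/-- A network is redundant if removing some comparator leaves the set of outputs unchanged. -/
def Redundant {n : ℕ} (N : List (Finset (Fin n × Fin n))) : Prop :=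
  ∃ k, ∃ hk : k < N.length, ∃ c ∈ N.get ⟨k, hk⟩,
    outputs (N.set k ((N.get ⟨k, hk⟩).erase c)) = outputs N

/-- A two-layer network `L₁;L₂` is saturated if it is non-redundant and adding any
comparator to its last layer yields a network whose outputs are not a subset of the
original outputs. -/
def Saturated2 {n : ℕ} (L1 L2 : Finset (Fin n × Fin n)) : Prop :=
  ¬ Redundant [L1, L2] ∧
  ∀ c : Fin n × Fin n, c ∉ L2 → IsLayer (insert c L2) →
    ¬ (outputs [L1, insert c L2] ⊆ outputs [L1, L2])

lemma layer_no_chain {n : ℕ} {L : Finset (Fin n × Fin n)} (hL : IsLayer L)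
    {p q r : Fin n} (h1 : (p, q) ∈ L) (h2 : (q, r) ∈ L) : False := by
  by_cases hd : ((p, q) : Fin n × Fin n) = (q, r)
  · injection hd with hpq hqr
    have := hL.1 _ h1
    rw [hpq] at this
    exact lt_irrefl _ this
  · exact (hL.2 _ h1 _ h2 hd).2.2.1 rfl

lemma layer_snd_unique {n : ℕ} {L : Finset (Fin n × Fin n)} (hL : IsLayer L)
    {p q r : Fin n} (h1 : (p, q) ∈ L) (h2 : (r, q) ∈ L) : p = r := by
  by_contra hne
  have hd : ((p, q) : Fin n × Fin n) ≠ (r, q) := by simp [hne]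
  exact (hL.2 _ h1 _ h2 hd).2.2.2 rfl

lemma applyLayer_fst {n : ℕ} {L : Finset (Fin n × Fin n)} (hL : IsLayer L)
    {i j : Fin n} (hij : (i, j) ∈ L) (x : Fin n → Bool) :
    applyLayer L x i = (x i && x j) := by
  have h : ∃ j', (i, j') ∈ L := ⟨j, hij⟩
  have hu : h.choose = j := by
    by_contra hne
    have hd : ((i, h.choose) : Fin n × Fin n) ≠ (i, j) := by simp [hne]
    exact (hL.2 _ h.choose_spec _ hij hd).1 rfl
  simp only [applyLayer]
  rw [dif_pos h, hu]

lemma applyLayer_snd {n : ℕ} {L : Finset (Fin n × Fin n)} (hL : IsLayer L)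
    {i j : Fin n} (hij : (i, j) ∈ L) (x : Fin n → Bool) :
    applyLayer L x j = (x i || x j) := by
  have hne1 : ¬ ∃ j', (j, j') ∈ L := by
    rintro ⟨j', hj'⟩
    exact layer_no_chain hL hij hj'
  have h2 : ∃ i', (i', j) ∈ L := ⟨i, hij⟩
  have hu : h2.choose = i := layer_snd_unique hL h2.choose_spec hij
  simp only [applyLayer]
  rw [dif_neg hne1, dif_pos h2, hu]

lemma applyLayer_unused {n : ℕ} {L : Finset (Fin n × Fin n)} {k : Fin n}
    (hk : ¬ UsedIn L k) (x : Fin n → Bool) :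
    applyLayer L x k = x k := by
  have h1 : ¬ ∃ j, (k, j) ∈ L := fun ⟨j, hj⟩ => hk ⟨(k, j), hj, Or.inl rfl⟩
  have h2 : ¬ ∃ i, (i, k) ∈ L := fun ⟨i, hi⟩ => hk ⟨(i, k), hi, Or.inr rfl⟩
  simp only [applyLayer]
  rw [dif_neg h1, dif_neg h2]

/-- case (i) in the proof of Theorem 2 of the paper.
Channels `a < b < c < d` with `(a,b),(c,d)` in the first layer, `b,d` unused in the
second layer, and `a`, `c` both smaller endpoints of second-layer comparators.  Adding
the comparator `(b,d)` to the second layer produces the output vector that is `0` exactly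
at positions `b` and `c`, which is not an output of the original network. -/
theorem statement4 (n : ℕ) (L1 L2 : Finset (Fin n × Fin n))
    (h1 : IsLayer L1) (h2 : IsLayer L2)
    (a b c d : Fin n) (hab : a < b) (hbc : b < c) (hcd : c < d)
    (hab1 : (a, b) ∈ L1) (hcd1 : (c, d) ∈ L1)
    (hb2 : ¬ UsedIn L2 b) (hd2 : ¬ UsedIn L2 d)
    (ha2 : ∃ u, (a, u) ∈ L2) (hc2 : ∃ v, (c, v) ∈ L2) :
    (fun k => if k = b ∨ k = c then false else true) ∈ outputs [L1, insert (b, d) L2] ∧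
    (fun k => if k = b ∨ k = c then false else true) ∉ outputs [L1, L2] ∧
    ¬ (outputs [L1, insert (b, d) L2] ⊆ outputs [L1, L2]) := by
  obtain ⟨u, hu⟩ := ha2
  obtain ⟨v, hv⟩ := hc2
  have hbc' : b ≠ c := hbc.ne
  have hbd' : b ≠ d := (hbc.trans hcd).ne
  have hcd' : c ≠ d := hcd.ne
  have hab' : a ≠ b := hab.ne
  have hac' : a ≠ c := (hab.trans hbc).ne
  -- the layer with (b,d) inserted
  set L2' := insert (b, d) L2 with hL2'def
  have hbdL2' : (b, d) ∈ L2' := Finset.mem_insert_self _ _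
  have hL2' : IsLayer L2' := by
    constructor
    · intro p hp
      rcases Finset.mem_insert.1 hp with rfl | hp
      · exact hbc.trans hcd
      · exact h2.1 _ hp
    · intro p hp p' hp' hne
      rcases Finset.mem_insert.1 hp with rfl | hp <;>
        rcases Finset.mem_insert.1 hp' with rfl | hp'
      · exact absurd rfl hne
      · refine ⟨fun h => hb2 ⟨p', hp', Or.inl h.symm⟩,
          fun h => hb2 ⟨p', hp', Or.inr h.symm⟩,
          fun h => hd2 ⟨p', hp', Or.inl h.symm⟩,
          fun h => hd2 ⟨p', hp', Or.inr h.symm⟩⟩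
      · refine ⟨fun h => hb2 ⟨p, hp, Or.inl h⟩,
          fun h => hd2 ⟨p, hp, Or.inl h⟩,
          fun h => hb2 ⟨p, hp, Or.inr h⟩,
          fun h => hd2 ⟨p, hp, Or.inr h⟩⟩
      · exact h2.2 _ hp _ hp' hne
  set y : Fin n → Bool := fun k => if k = b ∨ k = c then false else true with hy
  set z : Fin n → Bool := fun k => if k = c ∨ k = d then false else true with hz
  -- first layer fixes z
  have hL1z : applyLayer L1 z = z := by
    funext k
    by_cases hk1 : ∃ j, (k, j) ∈ L1
    · obtain ⟨j, hj⟩ := hk1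
      rw [applyLayer_fst h1 hj]
      by_cases hkc : k = c
      · subst hkc
        simp [hz]
      · have hjc : j ≠ c := fun e => layer_no_chain h1 (e ▸ hj) hcd1
        have hjd : j ≠ d := fun e => hkc (layer_snd_unique h1 (e ▸ hj) hcd1)
        have hkd : k ≠ d := fun e => layer_no_chain h1 hcd1 (e ▸ hj)
        simp [hz, hkc, hkd, hjc, hjd]
    · by_cases hk2 : ∃ i, (i, k) ∈ L1
      · obtain ⟨i, hi⟩ := hk2
        rw [applyLayer_snd h1 hi]
        have hkc : k ≠ c := fun e => layer_no_chain h1 (e ▸ hi) hcd1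
        by_cases hkd : k = d
        · have hic : i = c := (layer_snd_unique h1 hcd1 (hkd ▸ hi)).symm
          simp [hz, hic, hkd]
        · simp [hz, hkc, hkd]
      · exact applyLayer_unused
          (fun ⟨p, hp, hor⟩ => hor.elim
            (fun e => hk1 ⟨p.2, by rw [← e, Prod.mk.eta]; exact hp⟩)
            (fun e => hk2 ⟨p.1, by rw [← e, Prod.mk.eta]; exact hp⟩)) z
  -- second (augmented) layer maps z to y
  have hL2z : applyLayer L2' z = y := by
    funext k
    by_cases hkb : k = b
    · subst hkb
      rw [applyLayer_fst hL2' hbdL2']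
      simp [hz, hy, hbc', hbd']
    · by_cases hkd : k = d
      · subst hkd
        rw [applyLayer_snd hL2' hbdL2']
        simp [hz, hy, hbc', hbd', Ne.symm hbd', Ne.symm hcd']
      · by_cases hk1 : ∃ j, (k, j) ∈ L2'
        · obtain ⟨j, hj⟩ := hk1
          rw [applyLayer_fst hL2' hj]
          have hjL2 : (k, j) ∈ L2 := by
            rcases Finset.mem_insert.1 hj with e | h
            · exact absurd (congrArg Prod.fst e) hkb
            · exact h
          have hjc : j ≠ c := fun e => layer_no_chain h2 (e ▸ hjL2) hv
          have hjd : j ≠ d := fun e => hd2 ⟨(k, j), hjL2, Or.inr e⟩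
          by_cases hkc : k = c
          · simp [hz, hy, hkc, hjc, hjd]
          · simp [hz, hy, hkb, hkc, hkd, hjc, hjd]
        · by_cases hk2 : ∃ i, (i, k) ∈ L2'
          · obtain ⟨i, hi⟩ := hk2
            rw [applyLayer_snd hL2' hi]
            have hiL2 : (i, k) ∈ L2 := by
              rcases Finset.mem_insert.1 hi with e | h
              · exact absurd (congrArg Prod.snd e) hkd
              · exact h
            have hkc : k ≠ c := fun e => layer_no_chain h2 (e ▸ hiL2) hv
            simp [hz, hy, hkb, hkc, hkd]
          · have hkc : k ≠ c :=
              fun e => hk1 ⟨v, by rw [e]; exact Finset.mem_insert_of_mem hv⟩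
            rw [applyLayer_unused
              (fun ⟨p, hp, hor⟩ => hor.elim
                (fun e => hk1 ⟨p.2, by rw [← e, Prod.mk.eta]; exact hp⟩)
                (fun e => hk2 ⟨p.1, by rw [← e, Prod.mk.eta]; exact hp⟩)) z]
            simp [hz, hy, hkb, hkc, hkd]
  have hmem : y ∈ outputs [L1, L2'] := by
    refine ⟨z, ?_⟩
    show applyLayer L2' (applyLayer L1 z) = y
    rw [hL1z, hL2z]
  have hnmem : y ∉ outputs [L1, L2] := by
    rintro ⟨x, hx⟩
    have hx' : applyLayer L2 (applyLayer L1 x) = y := hx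
    set w := applyLayer L1 x with hw
    have hwb : w b = false := by
      have := congrFun hx' b
      rw [applyLayer_unused hb2] at this
      rw [this]
      simp [hy]
    have hxab : (x a || x b) = false := by
      rw [← applyLayer_snd h1 hab1 x, ← hw, hwb]
    have hwa : w a = false := by
      rw [hw, applyLayer_fst h1 hab1 x]
      rcases Bool.or_eq_false_iff.1 hxab with ⟨e1, e2⟩
      simp [e1]
    have hya : y a = false := by
      rw [← congrFun hx' a, applyLayer_fst h2 hu, hwa]
      simp
    simp [hy, hab', hac'] at hya
  exact ⟨hmem, hnmem, fun hsub => hnmem (hsub hmem)⟩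
end

section
/- Let C be a two-layer comparator network on n channels with first layer F'_n = {(i, n−i+1) : 1 ≤ i ≤ ⌊n/2⌋}, and let C^R be the reflection of C, obtained by replacing every comparator (i,j) of C by (n−j+1, n−i+1) (note F'_n is invariant under reflection, so C^R is again a two-layer network with first layer F'_n). Then C extends to a sorting network of depth d (i.e., there exist layers L_3,…,L_d such that C;L_3;…;L_d is a sorting network) if and only if C^R extends to a sorting network of depth d. -/
/-- The first layer `F'_n`: comparators `(i, n-i+1)` (1-indexed), i.e. pairs `(i,j)` with
`i < j` and `i + j = n - 1` (0-indexed).  `F'_n` is invariant under reflection. -/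
def Fn' (n : ℕ) : Finset (Fin n × Fin n) :=
  Finset.univ.filter (fun c => c.1 < c.2 ∧ c.1.val + c.2.val + 1 = n)

/-- The reflection of a layer: each comparator `(i,j)` becomes `(n-j+1, n-i+1)`
(1-indexed), i.e. `(j.rev, i.rev)` (0-indexed). -/
def reflLayer {n : ℕ} (L : Finset (Fin n × Fin n)) : Finset (Fin n × Fin n) :=
  L.image (fun c => (c.2.rev, c.1.rev))

lemma mem_reflLayer {n : ℕ} {L : Finset (Fin n × Fin n)} {a b : Fin n} :
    (a, b) ∈ reflLayer L ↔ (b.rev, a.rev) ∈ L := by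
  simp only [reflLayer, Finset.mem_image, Prod.mk.injEq]
  constructor
  · rintro ⟨⟨c1, c2⟩, hc, h1, h2⟩
    simp_all [← h1, ← h2, Fin.rev_rev]
  · intro h
    exact ⟨(b.rev, a.rev), h, by simp [Fin.rev_rev], by simp [Fin.rev_rev]⟩

lemma reflLayer_isLayer {n : ℕ} {L : Finset (Fin n × Fin n)} (h : IsLayer L) :
    IsLayer (reflLayer L) := by
  obtain ⟨h1, h2⟩ := h
  constructor
  · rintro ⟨a, b⟩ hab
    rw [mem_reflLayer] at hab
    have := h1 _ hab
    simpa [Fin.rev_lt_rev] using this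
  · rintro ⟨a, b⟩ hab ⟨a', b'⟩ hab' hne
    rw [mem_reflLayer] at hab hab'
    have hne' : (b.rev, a.rev) ≠ (b'.rev, a'.rev) := by
      simp only [ne_eq, Prod.mk.injEq, not_and_or] at hne ⊢
      rcases hne with h | h
      · exact Or.inr (fun he => h (Fin.rev_injective he))
      · exact Or.inl (fun he => h (Fin.rev_injective he))
    have := h2 _ hab _ hab' hne'
    simp only [ne_eq] at this ⊢
    refine ⟨?_, ?_, ?_, ?_⟩ <;>
      · intro he; subst he; simp_all

lemma reflLayer_reflLayer {n : ℕ} (L : Finset (Fin n × Fin n)) :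
    reflLayer (reflLayer L) = L := by
  ext ⟨a, b⟩
  rw [mem_reflLayer, mem_reflLayer]
  simp [Fin.rev_rev]

lemma layer_unique_fst {n : ℕ} {L : Finset (Fin n × Fin n)} (h : IsLayer L)
    {k j j' : Fin n} (hj : (k, j) ∈ L) (hj' : (k, j') ∈ L) : j = j' := by
  by_contra hne
  have := (h.2 _ hj _ hj' (by simp [hne])).1
  exact this rfl

lemma layer_unique_snd {n : ℕ} {L : Finset (Fin n × Fin n)} (h : IsLayer L)
    {k i i' : Fin n} (hi : (i, k) ∈ L) (hi' : (i', k) ∈ L) : i = i' := by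
  by_contra hne
  have := (h.2 _ hi _ hi' (by simp [hne])).2.2.2
  exact this rfl

lemma applyLayer_min {n : ℕ} {L : Finset (Fin n × Fin n)} (h : IsLayer L)
    {k j : Fin n} (hj : (k, j) ∈ L) (x : Fin n → Bool) :
    applyLayer L x k = (x k && x j) := by
  have he : ∃ j, (k, j) ∈ L := ⟨j, hj⟩
  rw [applyLayer, dif_pos he, layer_unique_fst h he.choose_spec hj]

lemma applyLayer_max {n : ℕ} {L : Finset (Fin n × Fin n)} (h : IsLayer L)
    {i k : Fin n} (hi : (i, k) ∈ L) (x : Fin n → Bool) :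
    applyLayer L x k = (x i || x k) := by
  have hnf : ¬ ∃ j, (k, j) ∈ L := by
    rintro ⟨j, hj⟩
    by_cases he : (k, j) = (i, k)
    · have hjk : j = k := congrArg Prod.snd he
      have := h.1 _ hj
      simp only [hjk] at this
      exact lt_irrefl _ this
    · exact (h.2 _ hj _ hi he).2.1 rfl
  have he : ∃ i, (i, k) ∈ L := ⟨i, hi⟩
  rw [applyLayer, dif_neg hnf, dif_pos he, layer_unique_snd h he.choose_spec hi]

lemma applyLayer_free {n : ℕ} {L : Finset (Fin n × Fin n)}
    {k : Fin n} (h1 : ¬ ∃ j, (k, j) ∈ L) (h2 : ¬ ∃ i, (i, k) ∈ L) (x : Fin n → Bool) :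
    applyLayer L x k = x k := by
  rw [applyLayer, dif_neg h1, dif_neg h2]

/-- conjugation -/
def conj {n : ℕ} (x : Fin n → Bool) : Fin n → Bool := fun k => ! x k.rev

lemma conj_conj {n : ℕ} (x : Fin n → Bool) : conj (conj x) = x := by
  funext k; simp [conj, Fin.rev_rev]

lemma applyLayer_reflLayer {n : ℕ} {L : Finset (Fin n × Fin n)} (h : IsLayer L)
    (x : Fin n → Bool) :
    applyLayer (reflLayer L) (conj x) = conj (applyLayer L x) := by
  funext k
  by_cases hmax : ∃ i, (i, k.rev) ∈ L
  · obtain ⟨i, hi⟩ := hmax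
    have hk : (k, i.rev) ∈ reflLayer L := by rw [mem_reflLayer]; simpa [Fin.rev_rev]
    rw [applyLayer_min (reflLayer_isLayer h) hk]
    simp only [conj, Fin.rev_rev, applyLayer_max h hi]
    cases x i <;> cases x k.rev <;> rfl
  · by_cases hmin : ∃ j, (k.rev, j) ∈ L
    · obtain ⟨j, hj⟩ := hmin
      have hk : (j.rev, k) ∈ reflLayer L := by rw [mem_reflLayer]; simpa [Fin.rev_rev]
      rw [applyLayer_max (reflLayer_isLayer h) hk]
      simp only [conj, Fin.rev_rev, applyLayer_min h hj]
      cases x j <;> cases x k.rev <;> rfl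
    · have h1 : ¬ ∃ j, (k, j) ∈ reflLayer L := by
        rintro ⟨j, hj⟩; rw [mem_reflLayer] at hj; exact hmax ⟨j.rev, hj⟩
      have h2 : ¬ ∃ i, (i, k) ∈ reflLayer L := by
        rintro ⟨i, hi⟩; rw [mem_reflLayer] at hi; exact hmin ⟨i.rev, hi⟩
      rw [applyLayer_free h1 h2]
      simp only [conj, applyLayer_free hmin hmax]

lemma applyNet_map_reflLayer {n : ℕ} (N : List (Finset (Fin n × Fin n)))
    (hN : ∀ L ∈ N, IsLayer L) (x : Fin n → Bool) :
    applyNet (N.map reflLayer) (conj x) = conj (applyNet N x) := by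
  induction N generalizing x with
  | nil => rfl
  | cons L N' ih =>
      have hL : IsLayer L := hN L (by simp)
      have hN' : ∀ L ∈ N', IsLayer L := fun L hL => hN L (by simp [hL])
      show applyNet (N'.map reflLayer) (applyLayer (reflLayer L) (conj x)) = _
      rw [applyLayer_reflLayer hL, ih hN' (applyLayer L x)]
      rfl

lemma monotone_conj {n : ℕ} {f : Fin n → Bool} (hf : Monotone f) :
    Monotone (conj f) := by
  intro k l hkl
  have h1 : f l.rev ≤ f k.rev := hf (Fin.rev_le_rev.mpr hkl)
  simp only [conj]
  revert h1
  cases f l.rev <;> cases f k.rev <;> simp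

lemma sorts_map_reflLayer {n : ℕ} (N : List (Finset (Fin n × Fin n)))
    (hN : ∀ L ∈ N, IsLayer L) (hs : Sorts N) : Sorts (N.map reflLayer) := by
  intro x
  have : applyNet (N.map reflLayer) x = conj (applyNet N (conj x)) := by
    conv_lhs => rw [← conj_conj x]
    exact applyNet_map_reflLayer N hN (conj x)
  rw [this]
  exact monotone_conj (hs (conj x))

lemma isLayer_Fn' (n : ℕ) : IsLayer (Fn' n) := by
  constructor
  · rintro ⟨a, b⟩ h
    simp only [Fn', Finset.mem_filter] at h
    exact h.2.1
  · rintro ⟨a, b⟩ h ⟨a', b'⟩ h' hne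
    simp only [Fn', Finset.mem_filter] at h h'
    obtain ⟨-, hlt, hsum⟩ := h
    obtain ⟨-, hlt', hsum'⟩ := h'
    have hne' : ¬ (a.val = a'.val ∧ b.val = b'.val) := by
      rintro ⟨e1, e2⟩
      exact hne (Prod.ext (Fin.val_injective e1) (Fin.val_injective e2))
    simp only [Fin.lt_def] at hlt hlt'
    refine ⟨fun (e : a = a') => ?_, fun (e : a = b') => ?_,
      fun (e : b = a') => ?_, fun (e : b = b') => ?_⟩ <;>
      · apply hne'
        have := congrArg Fin.val e
        omega

theorem statement14 (n : ℕ) (L2 : Finset (Fin n × Fin n)) (h2 : IsLayer L2) (d : ℕ) :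
    (∃ C : List (Finset (Fin n × Fin n)),
      (∀ L ∈ C, IsLayer L) ∧ (Fn' n :: L2 :: C).length = d ∧
      Sorts (Fn' n :: L2 :: C)) ↔
    (∃ C : List (Finset (Fin n × Fin n)),
      (∀ L ∈ C, IsLayer L) ∧ (reflLayer (Fn' n) :: reflLayer L2 :: C).length = d ∧
      Sorts (reflLayer (Fn' n) :: reflLayer L2 :: C)) := by
  constructor
  · rintro ⟨C, hC, hlen, hs⟩
    refine ⟨C.map reflLayer, ?_, by simpa using hlen, ?_⟩
    · intro L hL
      obtain ⟨L', hL', rfl⟩ := List.mem_map.mp hL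
      exact reflLayer_isLayer (hC L' hL')
    · have hall : ∀ L ∈ (Fn' n :: L2 :: C), IsLayer L := by
        intro L hL
        rcases List.mem_cons.mp hL with rfl | hL
        · exact isLayer_Fn' n
        rcases List.mem_cons.mp hL with rfl | hL
        · exact h2
        · exact hC L hL
      simpa using sorts_map_reflLayer _ hall hs
  · rintro ⟨C, hC, hlen, hs⟩
    refine ⟨C.map reflLayer, ?_, by simpa using hlen, ?_⟩
    · intro L hL
      obtain ⟨L', hL', rfl⟩ := List.mem_map.mp hL
      exact reflLayer_isLayer (hC L' hL')
    · have hall : ∀ L ∈ (reflLayer (Fn' n) :: reflLayer L2 :: C), IsLayer L := by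
        intro L hL
        rcases List.mem_cons.mp hL with rfl | hL
        · exact reflLayer_isLayer (isLayer_Fn' n)
        rcases List.mem_cons.mp hL with rfl | hL
        · exact reflLayer_isLayer h2
        · exact hC L hL
      have := sorts_map_reflLayer _ hall hs
      simpa [reflLayer_reflLayer] using this
end
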